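/- Let R be a normed ring, N a finitely generated R-module with filling norm ‖·‖_N, and suppose N is an internal direct summand of a free R-module F equipped with an ℓ¹-norm ‖·‖₁. Then ‖·‖_N and the restriction of ‖·‖₁ to N are equivalent norms on N. -/

import Mathlib

variable {R : Type*} [Ring R]

/-- The ℓ¹-norm on the finitely generated based free `R`-module `Λ → R`. -/
noncomputable def l1Norm {Λ : Type*} [Fintype Λ] (ν : RingNorm R) (f : Λ → R) : ℝ :=
  ∑ x, ν (f x)

/-- The ℓ¹-norm on a free `R`-module with basis `Λ`, realized as `Λ →₀ R`. -/
noncomputable def l1NormF {Λ : Type*} (ν : RingNorm R) (f : Λ →₀ R) : ℝ :=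
  f.sum fun _ r => ν r

/-- The filling norm on a module `P` induced by a surjection `ρ : (Λ → R) → P`. -/
noncomputable def fillingNorm {Λ : Type*} [Fintype Λ] {P : Type*} [AddCommGroup P] [Module R P]
    (ν : RingNorm R) (ρ : (Λ → R) →ₗ[R] P) (p : P) : ℝ :=
  sInf {c : ℝ | ∃ x : Λ → R, ρ x = p ∧ l1Norm ν x = c}

/-!
The inclusion `N → F` composed with `ρ` is a linear map out of a finite free module, so it is
bounded in ℓ¹ by the total norm of the images of the basis vectors; this gives
`‖n‖₁ ≤ C ‖n‖_N`. Conversely, `F` is projective, so the projection `F → N` along `N'` lifts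
through `ρ` to a linear map `σ : F → (Λ' → R)`. As `N` is finitely generated, all its elements are
supported on one finite set of basis vectors of `F`, on which `σ` is bounded; hence
`‖n‖_N ≤ ‖σ n‖₁ ≤ C ‖n‖₁`.
-/

open Finset

theorem Finset.sum_mul_le_sum_mul_sum_of_nonneg {ι S : Type*} [Semiring S] [PartialOrder S]
    [IsOrderedRing S] (s : Finset ι) {a b : ι → S}
    (ha : ∀ i ∈ s, 0 ≤ a i) (hb : ∀ i ∈ s, 0 ≤ b i) :
    ∑ i ∈ s, a i * b i ≤ (∑ i ∈ s, a i) * ∑ i ∈ s, b i := by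
  rw [mul_sum]
  exact sum_le_sum fun i hi => mul_le_mul_of_nonneg_right (single_le_sum ha hi) (hb i hi)

theorem exists_pos_equiv_of_le_mul {α : Type*} {p q : α → ℝ} {a b : ℝ}
    (hp : ∀ x, 0 ≤ p x) (hq : ∀ x, 0 ≤ q x)
    (hpq : ∀ x, p x ≤ a * q x) (hqp : ∀ x, q x ≤ b * p x) :
    ∃ C : ℝ, 0 < C ∧ ∀ x, C⁻¹ * p x ≤ q x ∧ q x ≤ C * p x := by
  have hC : 0 < |a| + |b| + 1 := by positivity
  refine ⟨|a| + |b| + 1, hC, fun x => ⟨?_, ?_⟩⟩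
  · rw [inv_mul_le_iff₀ hC]
    nlinarith [hpq x, hq x, le_abs_self a, abs_nonneg b]
  · nlinarith [hqp x, hp x, le_abs_self b, abs_nonneg a]

theorem support_map_subset_biUnion {ι Λ : Type*} [Fintype ι] [DecidableEq ι] [DecidableEq Λ]
    (f : (ι → R) →ₗ[R] (Λ →₀ R)) (x : ι → R) :
    (f x).support ⊆ univ.biUnion fun i => (f (Pi.single i 1)).support := by
  rw [pi_eq_sum_univ' x, map_sum]
  refine Finsupp.support_finsetSum.trans (biUnion_mono fun i _ => ?_)
  rw [map_smul]
  exact Finsupp.support_smul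

section

variable (ν : RingNorm R)

theorem l1Norm_nonneg {Λ : Type*} [Fintype Λ] (f : Λ → R) : 0 ≤ l1Norm ν f :=
  sum_nonneg fun _ _ => apply_nonneg ν _

theorem l1Norm_add_le {Λ : Type*} [Fintype Λ] (f g : Λ → R) :
    l1Norm ν (f + g) ≤ l1Norm ν f + l1Norm ν g := by
  rw [l1Norm, l1Norm, l1Norm, ← sum_add_distrib]
  exact sum_le_sum fun x _ => map_add_le_add ν (f x) (g x)

theorem l1Norm_smul_le {Λ : Type*} [Fintype Λ] (r : R) (f : Λ → R) :
    l1Norm ν (r • f) ≤ ν r * l1Norm ν f := by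
  rw [l1Norm, l1Norm, mul_sum]
  exact sum_le_sum fun x _ => map_mul_le_mul ν r (f x)

theorem l1NormF_eq_sum_of_support_subset {Λ : Type*} {f : Λ →₀ R} {s : Finset Λ}
    (hs : f.support ⊆ s) : l1NormF ν f = ∑ a ∈ s, ν (f a) :=
  Finsupp.sum_of_support_subset f hs _ fun _ _ => map_zero ν

theorem l1NormF_nonneg {Λ : Type*} (f : Λ →₀ R) : 0 ≤ l1NormF ν f :=
  (l1NormF_eq_sum_of_support_subset ν subset_rfl).symm ▸ sum_nonneg fun _ _ => apply_nonneg ν _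

theorem l1NormF_add_le {Λ : Type*} [DecidableEq Λ] (f g : Λ →₀ R) :
    l1NormF ν (f + g) ≤ l1NormF ν f + l1NormF ν g := by
  rw [l1NormF_eq_sum_of_support_subset ν Finsupp.support_add,
    l1NormF_eq_sum_of_support_subset ν subset_union_left,
    l1NormF_eq_sum_of_support_subset ν subset_union_right, ← sum_add_distrib]
  exact sum_le_sum fun a _ => map_add_le_add ν (f a) (g a)

theorem l1NormF_smul_le {Λ : Type*} (r : R) (f : Λ →₀ R) :
    l1NormF ν (r • f) ≤ ν r * l1NormF ν f := by
  rw [l1NormF_eq_sum_of_support_subset ν Finsupp.support_smul,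
    l1NormF_eq_sum_of_support_subset ν subset_rfl, mul_sum]
  exact sum_le_sum fun a _ => map_mul_le_mul ν r (f a)

theorem l1NormF_map_le {ι Λ : Type*} [Fintype ι] [DecidableEq ι]
    (f : (ι → R) →ₗ[R] (Λ →₀ R)) (x : ι → R) :
    l1NormF ν (f x) ≤ (∑ i, l1NormF ν (f (Pi.single i 1))) * l1Norm ν x := by
  classical
  calc l1NormF ν (f x) = l1NormF ν (∑ i, x i • f (Pi.single i 1)) := by
        conv_lhs => rw [pi_eq_sum_univ' x, map_sum]
        simp only [map_smul]
    _ ≤ ∑ i, l1NormF ν (x i • f (Pi.single i 1)) :=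
        le_sum_of_subadditive _ (by simp [l1NormF]) (l1NormF_add_le ν) _ _
    _ ≤ ∑ i, l1NormF ν (f (Pi.single i 1)) * ν (x i) :=
        sum_le_sum fun i _ => (l1NormF_smul_le ν _ _).trans_eq (mul_comm _ _)
    _ ≤ _ := sum_mul_le_sum_mul_sum_of_nonneg _ (fun _ _ => l1NormF_nonneg ν _)
        fun _ _ => apply_nonneg ν _

theorem l1Norm_map_le_of_support_subset {ι Λ : Type*} [Fintype ι]
    (g : (Λ →₀ R) →ₗ[R] (ι → R)) {f : Λ →₀ R} {s : Finset Λ} (hs : f.support ⊆ s) :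
    l1Norm ν (g f) ≤ (∑ a ∈ s, l1Norm ν (g (Finsupp.single a 1))) * l1NormF ν f := by
  calc l1Norm ν (g f) = l1Norm ν (∑ a ∈ s, f a • g (Finsupp.single a 1)) := by
        conv_lhs => rw [← Finsupp.sum_single f, Finsupp.sum_of_support_subset f hs _ (by simp)]
        simp only [map_sum, ← Finsupp.smul_single_one _ (f _), map_smul]
    _ ≤ ∑ a ∈ s, l1Norm ν (f a • g (Finsupp.single a 1)) :=
        le_sum_of_subadditive _ (by simp [l1Norm]) (l1Norm_add_le ν) _ _
    _ ≤ ∑ a ∈ s, l1Norm ν (g (Finsupp.single a 1)) * ν (f a) :=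
        sum_le_sum fun a _ => (l1Norm_smul_le ν _ _).trans_eq (mul_comm _ _)
    _ ≤ _ := by
        rw [l1NormF_eq_sum_of_support_subset ν hs]
        exact sum_mul_le_sum_mul_sum_of_nonneg _ (fun _ _ => l1Norm_nonneg ν _)
          fun _ _ => apply_nonneg ν _

theorem fillingNorm_nonneg {ι P : Type*} [Fintype ι] [AddCommGroup P] [Module R P]
    (ρ : (ι → R) →ₗ[R] P) (p : P) : 0 ≤ fillingNorm ν ρ p :=
  Real.sInf_nonneg fun _ ⟨x, _, hx⟩ => hx ▸ l1Norm_nonneg ν x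

theorem fillingNorm_le {ι P : Type*} [Fintype ι] [AddCommGroup P] [Module R P]
    (ρ : (ι → R) →ₗ[R] P) {x : ι → R} {p : P} (hx : ρ x = p) :
    fillingNorm ν ρ p ≤ l1Norm ν x :=
  csInf_le ⟨0, fun _ ⟨y, _, hy⟩ => hy ▸ l1Norm_nonneg ν y⟩ ⟨x, hx, rfl⟩

theorem le_mul_fillingNorm {ι P : Type*} [Fintype ι] [AddCommGroup P] [Module R P]
    {ρ : (ι → R) →ₗ[R] P} (hρ : Function.Surjective ρ) {p : P} {c M : ℝ} (hM : 0 ≤ M)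
    (h : ∀ x, ρ x = p → c ≤ M * l1Norm ν x) : c ≤ M * fillingNorm ν ρ p := by
  obtain ⟨x₀, hx₀⟩ := hρ p
  rcases hM.eq_or_lt with rfl | hM
  · simpa using h x₀ hx₀
  rw [← div_le_iff₀' hM]
  refine le_csInf ⟨_, x₀, hx₀, rfl⟩ ?_
  rintro _ ⟨x, hx, rfl⟩
  rw [div_le_iff₀' hM]
  exact h x hx

end

/-- If a finitely generated module `N` (with a filling norm) is an internal direct summand of
a free module `F = Λ →₀ R` with its ℓ¹-norm, then the filling norm and the restriction of the
ℓ¹-norm are equivalent norms on `N`. -/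
theorem fillingNorm_equiv_l1_of_summand {Λ : Type*} (ν : RingNorm R)
    (N N' : Submodule R (Λ →₀ R)) (hcompl : IsCompl N N')
    {Λ' : Type*} [Fintype Λ']
    (ρ : (Λ' → R) →ₗ[R] N) (hρ : Function.Surjective ρ) :
    ∃ C : ℝ, 0 < C ∧ ∀ n : N,
      C⁻¹ * fillingNorm ν ρ n ≤ l1NormF ν (n : Λ →₀ R) ∧
      l1NormF ν (n : Λ →₀ R) ≤ C * fillingNorm ν ρ n := by
  classical
  obtain ⟨σ, hσ⟩ := Module.projective_lifting_property ρ (N.projectionOnto N' hcompl) hρ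
  let f := N.subtype ∘ₗ ρ
  let S := univ.biUnion fun i => (f (Pi.single i 1)).support
  have hS (n : N) : (n : Λ →₀ R).support ⊆ S := by
    obtain ⟨x, rfl⟩ := hρ n
    exact support_map_subset_biUnion f x
  have hfill (n : N) : fillingNorm ν ρ n ≤
      (∑ a ∈ S, l1Norm ν (σ (Finsupp.single a 1))) * l1NormF ν (n : Λ →₀ R) := by
    have hσn : ρ (σ n) = n := by
      rw [← LinearMap.comp_apply, hσ, Submodule.projectionOnto_apply_left]
    exact (fillingNorm_le ν ρ (p := n) hσn).trans (l1Norm_map_le_of_support_subset ν σ (hS n))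
  have hl1 (n : N) : l1NormF ν (n : Λ →₀ R) ≤
      (∑ i, l1NormF ν (f (Pi.single i 1))) * fillingNorm ν ρ n := by
    refine le_mul_fillingNorm ν hρ (sum_nonneg fun _ _ => l1NormF_nonneg ν _) fun x hx => ?_
    subst hx
    exact l1NormF_map_le ν f x
  exact exists_pos_equiv_of_le_mul (fillingNorm_nonneg ν ρ ·) (fun _ => l1NormF_nonneg ν _)
    hfill hl1
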